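/- If χ ∈ W₀ and det χ(z) → 1 as z → 0 along ℂ ∖ Λ, then det χ(z) = 1 for all z ∈ ℂ ∖ Λ. (This is the argument of Section 5 showing that the factor χ(t,z) produced by the Grassmannian flows has unit determinant, hence lies in G_out.) -/

import Mathlib

noncomputable section

open Filter Topology

attribute [local instance] Matrix.normedAddCommGroup Matrix.normedSpace

/-- The Pauli matrix σ₁. -/
def σ1 : Matrix (Fin 2) (Fin 2) ℂ := !![0, 1; 1, 0]

/-- The Pauli matrix σ₂. -/
def σ2 : Matrix (Fin 2) (Fin 2) ℂ := !![0, -Complex.I; Complex.I, 0]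

/-- The Pauli matrix σ₃. -/
def σ3 : Matrix (Fin 2) (Fin 2) ℂ := !![1, 0; 0, -1]

/-- The period lattice Λ = 2ω₁ℤ + 2ω₃ℤ. -/
def lattice (ω₁ ω₃ : ℂ) : Set ℂ :=
  {z | ∃ m n : ℤ, z = 2 * (m : ℂ) * ω₁ + 2 * (n : ℂ) * ω₃}

/-- Twisted double periodicity on a set `S`: `X (z + 2ω_a) = σ_a * X z * σ_a` for `a = 1,2,3`,
with `ω₂ = -ω₁ - ω₃`. -/
def TwistedPeriodicOn (ω₁ ω₃ : ℂ) (S : Set ℂ)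
    (X : ℂ → Matrix (Fin 2) (Fin 2) ℂ) : Prop :=
  (∀ z ∈ S, X (z + 2 * ω₁) = σ1 * X z * σ1) ∧
  (∀ z ∈ S, X (z + 2 * (-ω₁ - ω₃)) = σ2 * X z * σ2) ∧
  (∀ z ∈ S, X (z + 2 * ω₃) = σ3 * X z * σ3)

/-- The vacuum point `W₀`: functions holomorphic on `ℂ ∖ Λ` and twisted doubly periodic there. -/
def W0 (ω₁ ω₃ : ℂ) : Set (ℂ → Matrix (Fin 2) (Fin 2) ℂ) :=
  {X | DifferentiableOn ℂ X (lattice ω₁ ω₃)ᶜ ∧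
       TwistedPeriodicOn ω₁ ω₃ (lattice ω₁ ω₃)ᶜ X}

/-!
Since `σ₁² = σ₃² = 1`, `det χ` is holomorphic off `Λ` and periodic under `2ω₁` and `2ω₃`, hence
under all of `Λ`. Extended by the value `1` on `Λ`, it is periodic everywhere, so its limit `1`
at `0` is also its limit at every lattice point; as `Λ` is discrete, Riemann's removable
singularity theorem makes the extension entire. An entire `Λ`-periodic function takes all its
values on the compact closure of a fundamental domain, so it is bounded and, by Liouville,
constant, equal to its value `1` at `0`.
-/

open Function Set Submodule

theorem Matrix.det_mul_mul_of_mul_self_eq_one {n R : Type*} [Fintype n] [DecidableEq n] [CommRing R]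
    {σ : Matrix n n R} (hσ : σ * σ = 1) (X : Matrix n n R) : (σ * X * σ).det = X.det := by
  rw [Matrix.det_mul, Matrix.det_mul, mul_right_comm, ← Matrix.det_mul, hσ, Matrix.det_one, one_mul]

theorem σ1_mul_self : σ1 * σ1 = 1 := by
  ext i j; fin_cases i <;> fin_cases j <;> simp [σ1]

theorem σ3_mul_self : σ3 * σ3 = 1 := by
  ext i j; fin_cases i <;> fin_cases j <;> simp [σ3]

theorem DifferentiableOn.matrix_det {𝕜 n : Type*} [NontriviallyNormedField 𝕜]
    [Fintype n] [DecidableEq n] {s : Set 𝕜} {f : 𝕜 → Matrix n n 𝕜} (hf : DifferentiableOn 𝕜 f s) :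
    DifferentiableOn 𝕜 (fun z => (f z).det) s := by
  simp only [Matrix.det_apply]
  fun_prop

theorem Function.Periodic.continuousAt_add {α β : Type*} [AddGroup α] [TopologicalSpace α]
    [IsTopologicalAddGroup α] [TopologicalSpace β] {G : α → β} {c x : α} (h : Periodic G c)
    (hx : ContinuousAt G x) : ContinuousAt G (x + c) := by
  have hG : G = fun z => G (z - c) := funext fun z => (h.sub_eq z).symm
  rw [hG]
  exact hx.comp_of_eq (continuous_sub_right c).continuousAt (add_sub_cancel_right x c)

theorem Set.periodic_piecewise {α β : Type*} [Add α] {S : Set α} [∀ z, Decidable (z ∈ S)]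
    {f g : α → β} {c : α} (hS : ∀ z, z + c ∈ S ↔ z ∈ S) (hg : Periodic g c)
    (hf : ∀ z ∉ S, f (z + c) = f z) : Periodic (S.piecewise g f) c := by
  intro z
  by_cases hz : z ∈ S
  · simp [piecewise, hz, hS, hg z]
  · simp [piecewise, hz, hS, hf z hz]

theorem Differentiable.apply_eq_apply_of_periodic_zspan {ι F : Type*} [Fintype ι]
    [NormedAddCommGroup F] [NormedSpace ℂ F] (b : Module.Basis ι ℝ ℂ) {G : ℂ → F}
    (hG : Differentiable ℂ G) (hper : ∀ v ∈ span ℤ (range b), Periodic G v) (z w : ℂ) :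
    G z = G w := by
  refine hG.apply_eq_apply_of_bounded ?_ z w
  have hK : IsCompact (closure (ZSpan.fundamentalDomain b)) :=
    Metric.isCompact_of_isClosed_isBounded isClosed_closure
      (ZSpan.fundamentalDomain_isBounded b).closure
  refine (hK.image hG.continuous).isBounded.subset ?_
  rintro _ ⟨z, rfl⟩
  refine ⟨ZSpan.fract b z, subset_closure (ZSpan.fract_mem_fundamentalDomain b z), ?_⟩
  rw [ZSpan.fract_apply]
  exact hper _ (neg_mem (ZSpan.floor b z).2) z

theorem differentiable_of_continuousAt_of_discrete {E : Type*} [NormedAddCommGroup E]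
    [NormedSpace ℂ E] [CompleteSpace E] {S : Set ℂ} {G : ℂ → E} (hS : ∀ p ∈ S, Sᶜ ∈ 𝓝[≠] p)
    (hG : ∀ z ∉ S, DifferentiableAt ℂ G z) (hcont : ∀ p ∈ S, ContinuousAt G p) :
    Differentiable ℂ G := by
  intro z
  by_cases hz : z ∈ S
  · exact (Complex.analyticAt_of_differentiable_on_punctured_nhds_of_continuousAt
      (mem_of_superset (hS z hz) hG) (hcont z hz)).differentiableAt
  · exact hG z hz

section Lattice

variable {ω₁ ω₃ : ℂ}

theorem lattice_eq_span :
    lattice ω₁ ω₃ = (span ℤ {2 * ω₁, 2 * ω₃} : Set ℂ) := by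
  ext z
  rw [SetLike.mem_coe, mem_span_pair]
  constructor
  · rintro ⟨m, n, rfl⟩; exact ⟨m, n, by push_cast [zsmul_eq_mul]; ring⟩
  · rintro ⟨m, n, rfl⟩; exact ⟨m, n, by push_cast [zsmul_eq_mul]; ring⟩

theorem zero_mem_lattice : (0 : ℂ) ∈ lattice ω₁ ω₃ := ⟨0, 0, by simp⟩

theorem add_mem_lattice_iff {p : ℂ} (hp : p ∈ lattice ω₁ ω₃) (z : ℂ) :
    z + p ∈ lattice ω₁ ω₃ ↔ z ∈ lattice ω₁ ω₃ := by
  rw [lattice_eq_span] at hp ⊢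
  exact (span ℤ _).toAddSubgroup.add_mem_cancel_right hp

theorem two_mul_mem_lattice_left : 2 * ω₁ ∈ lattice ω₁ ω₃ := ⟨1, 0, by simp⟩

theorem two_mul_mem_lattice_right : 2 * ω₃ ∈ lattice ω₁ ω₃ := ⟨0, 1, by simp⟩

theorem Function.Periodic.of_mem_lattice {α : Type*} {G : ℂ → α} (h₁ : Periodic G (2 * ω₁))
    (h₃ : Periodic G (2 * ω₃)) {p : ℂ} (hp : p ∈ lattice ω₁ ω₃) : Periodic G p := by
  obtain ⟨m, n, rfl⟩ := hp
  rw [show 2 * (m : ℂ) * ω₁ + 2 * n * ω₃ = m * (2 * ω₁) + n * (2 * ω₃) by ring]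
  exact (h₁.int_mul m).add_period (h₃.int_mul n)

theorem exists_basis_lattice_eq_span (hind : LinearIndependent ℝ ![ω₁, ω₃]) :
    ∃ b : Module.Basis (Fin 2) ℝ ℂ, lattice ω₁ ω₃ = span ℤ (range b) := by
  have hind₂ : LinearIndependent ℝ ![2 * ω₁, 2 * ω₃] := by
    convert hind.units_smul fun _ => (Units.mk0 (2 : ℝ) two_ne_zero) using 1
    ext i; fin_cases i <;> simp [Complex.real_smul]
  refine ⟨basisOfLinearIndependentOfCardEqFinrank hind₂ (by simp), ?_⟩
  rw [coe_basisOfLinearIndependentOfCardEqFinrank, Matrix.range_cons, Matrix.range_cons,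
    Matrix.range_empty, union_empty, singleton_union, lattice_eq_span]

theorem isClosed_lattice (hind : LinearIndependent ℝ ![ω₁, ω₃]) : IsClosed (lattice ω₁ ω₃) := by
  obtain ⟨b, hb⟩ := exists_basis_lattice_eq_span hind
  rw [hb, ← coe_toAddSubgroup]
  exact AddSubgroup.isClosed_of_discrete

theorem compl_lattice_mem_nhdsNE (hind : LinearIndependent ℝ ![ω₁, ω₃]) {p : ℂ}
    (hp : p ∈ lattice ω₁ ω₃) : (lattice ω₁ ω₃)ᶜ ∈ 𝓝[≠] p := by
  obtain ⟨b, hb⟩ := exists_basis_lattice_eq_span hind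
  rw [hb] at hp ⊢
  exact inf_principal_eq_bot.1 (discreteTopology_subtype_iff.1
    (inferInstanceAs (DiscreteTopology (span ℤ (range b)))) p hp)

end Lattice

/-- if `χ ∈ W₀` and `det χ(z) → 1` as `z → 0` along `ℂ ∖ Λ`, then
`det χ(z) = 1` identically on `ℂ ∖ Λ`. -/
theorem W0_det_eq_one (ω₁ ω₃ : ℂ)
    (hind : LinearIndependent ℝ ![ω₁, ω₃])
    (χ : ℂ → Matrix (Fin 2) (Fin 2) ℂ) (hχ : χ ∈ W0 ω₁ ω₃)
    (hdet : Tendsto (fun z => (χ z).det) (𝓝[(lattice ω₁ ω₃)ᶜ] 0) (𝓝 1)) :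
    ∀ z ∈ (lattice ω₁ ω₃)ᶜ, (χ z).det = 1 := by
  classical
  obtain ⟨hdiff, hper₁, -, hper₃⟩ := hχ
  set Λ := lattice ω₁ ω₃
  set F : ℂ → ℂ := Λ.piecewise 1 fun z => (χ z).det
  have hF₀ : F 0 = 1 := piecewise_eq_of_mem _ _ _ zero_mem_lattice
  have hF_compl : ∀ z ∉ Λ, F z = (χ z).det := fun z hz => piecewise_eq_of_notMem _ _ _ hz
  have hF_periodic : ∀ p ∈ Λ, Periodic F p := fun p =>
    Periodic.of_mem_lattice
      (periodic_piecewise (add_mem_lattice_iff two_mul_mem_lattice_left) (fun _ => rfl)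
        fun z hz => by rw [hper₁ z hz, Matrix.det_mul_mul_of_mul_self_eq_one σ1_mul_self])
      (periodic_piecewise (add_mem_lattice_iff two_mul_mem_lattice_right) (fun _ => rfl)
        fun z hz => by rw [hper₃ z hz, Matrix.det_mul_mul_of_mul_self_eq_one σ3_mul_self])
  have hF_cont₀ : ContinuousAt F 0 := by
    rw [← continuousWithinAt_compl_self]
    refine .mono_of_mem_nhdsWithin ?_ (compl_lattice_mem_nhdsNE hind zero_mem_lattice)
    rw [ContinuousWithinAt, hF₀]
    exact tendsto_nhdsWithin_congr (fun z hz => (hF_compl z hz).symm) hdet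
  have hF_diff : Differentiable ℂ F := by
    refine differentiable_of_continuousAt_of_discrete (fun p => compl_lattice_mem_nhdsNE hind)
      (fun z hz => ?_) fun p hp => by simpa using (hF_periodic p hp).continuousAt_add hF_cont₀
    have hΛc : Λᶜ ∈ 𝓝 z := (isClosed_lattice hind).isOpen_compl.mem_nhds hz
    refine (hdiff.matrix_det.differentiableAt hΛc).congr_of_eventuallyEq ?_
    filter_upwards [hΛc] with w hw using hF_compl w hw
  obtain ⟨b, hb⟩ := exists_basis_lattice_eq_span hind
  intro z hz
  rw [← hF_compl z hz, ← hF₀]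
  exact hF_diff.apply_eq_apply_of_periodic_zspan b (fun v hv => hF_periodic v (hb.ge hv)) z 0
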